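/- arXiv:1111.0669 — 2 statements merged into one kernel-verified Lean document; each statement's English description precedes it below -/
import Mathlib

section
/- The distributional Fourier transform of the function x ↦ j₀(Ω|x|) on ℝ², where j₀(s) = ∫₀^{2π} e^{is cos φ} dφ, is the measure (2π/Ω) δ(|k| - Ω); precisely, for every Schwartz function ψ on ℝ², ∫_{ℝ²} j₀(Ω|x|) (Fψ)(x) dx = (2π/Ω) ∫_{|k|=Ω} ψ(k) dσ(k) = 2π ∫₀^{2π} ψ(Ω cos φ, Ω sin φ) dφ, with the unitary convention Fψ(k) = (2π)^{-1} ∫ e^{-ik·x} ψ(x) dx. -/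
noncomputable section
open MeasureTheory

/-- j₀(s) = ∫₀^{2π} e^{i s cos φ} dφ. -/
def j0 (s : ℂ) : ℂ := ∫ φ in (0:ℝ)..(2 * Real.pi), Complex.exp (Complex.I * s * Complex.cos (φ : ℂ))

/-- Unitary Fourier transform on ℝ²: Fψ(k) = (2π)⁻¹ ∫ e^{-ik·x} ψ(x) dx. -/
def FT (ψ : ℝ × ℝ → ℂ) (k : ℝ × ℝ) : ℂ :=
  (2 * Real.pi : ℂ)⁻¹ * ∫ x : ℝ × ℝ, Complex.exp (-Complex.I * ((k.1 * x.1 + k.2 * x.2 : ℝ) : ℂ)) * ψ x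


/-! Plane waves of wave number `Ω` averaged over all directions give `j₀(Ω|x|)`, so after
exchanging the angular and spatial integrals each direction contributes the inverse Fourier
transform of `Fψ` at the point `(Ω cos φ, Ω sin φ)` of the circle, which is `2π ψ` there by
Fourier inversion (the factor `2π` comes from the unitary normalisation of `F` in two
dimensions). -/

open Real Complex MeasureTheory FourierTransform
open scoped RealInnerProductSpace SchwartzMap

section AngularFourierInversion

variable {V : Type*} [NormedAddCommGroup V] [InnerProductSpace ℝ V] [FiniteDimensional ℝ V]
  [MeasurableSpace V] [BorelSpace V]

theorem integral_cexp_inner_mul_fourier_inv_two_pi_smul {f : V → ℂ} (hf : Integrable f)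
    (hFf : Integrable (𝓕 f)) {x : V} (hx : ContinuousAt f x) :
    ∫ v, exp (I * ⟪v, x⟫) * 𝓕 f ((2 * π)⁻¹ • v) = (2 * π) ^ Module.finrank ℝ V * f x := by
  have h2π : (2 * π : ℝ) ≠ 0 := by positivity
  set G : V → ℂ := fun w ↦ exp (↑(2 * π * ⟪w, x⟫) * I) • 𝓕 f w
  have hG : ∀ v : V, exp (I * ⟪v, x⟫) * 𝓕 f ((2 * π)⁻¹ • v) = G ((2 * π)⁻¹ • v) := by
    intro v
    simp only [G, inner_smul_left, smul_eq_mul, RCLike.conj_to_real, ← mul_assoc,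
      mul_inv_cancel₀ h2π, one_mul, mul_comm I]
  calc ∫ v, exp (I * ⟪v, x⟫) * 𝓕 f ((2 * π)⁻¹ • v)
      = ∫ v, G ((2 * π)⁻¹ • v) := by simp_rw [hG]
    _ = (2 * π) ^ Module.finrank ℝ V • 𝓕⁻ (𝓕 f) x := by
      rw [Measure.integral_comp_smul, fourierInv_eq', inv_pow, inv_inv,
        abs_of_pos (by positivity)]
    _ = (2 * π) ^ Module.finrank ℝ V * f x := by
      rw [hf.fourierInv_fourier_eq hFf hx, real_smul]
      push_cast
      rfl

end AngularFourierInversion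

/- `ℝ × ℝ` carries the sup norm, so Mathlib's Fourier transform `𝓕` (with kernel
`e^{-2πi⟪v, w⟫}`) is taken on the Euclidean plane `WithLp 2 (ℝ × ℝ)`. -/
theorem FT_eq_fourier (ψ : ℝ × ℝ → ℂ) (k : ℝ × ℝ) :
    FT ψ k = (2 * π : ℂ)⁻¹ *
      𝓕 (fun v : WithLp 2 (ℝ × ℝ) ↦ ψ (WithLp.ofLp v)) ((2 * π)⁻¹ • WithLp.toLp 2 k) := by
  rw [FT, fourier_eq', ← (WithLp.volume_preserving_symm_measurableEquiv_toLp_prod ℝ ℝ).integral_comp']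
  congr 2
  ext v
  rw [smul_eq_mul]
  congr 2
  have hπ : (π : ℂ) ≠ 0 := ofReal_ne_zero.mpr pi_ne_zero
  simp only [MeasurableEquiv.coe_toLp_symm, WithLp.prod_inner_apply, inner_smul_right,
    RCLike.inner_apply, conj_trivial]
  push_cast
  field_simp

def SchwartzMap.compOfLp (ψ : 𝓢(ℝ × ℝ, ℂ)) : 𝓢(WithLp 2 (ℝ × ℝ), ℂ) :=
  SchwartzMap.compCLMOfContinuousLinearEquiv ℝ (WithLp.prodContinuousLinearEquiv 2 ℝ ℝ ℝ) ψ

theorem SchwartzMap.coe_compOfLp (ψ : 𝓢(ℝ × ℝ, ℂ)) :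
    ⇑ψ.compOfLp = fun v ↦ ψ (WithLp.ofLp v) :=
  rfl

theorem integrable_FT (ψ : 𝓢(ℝ × ℝ, ℂ)) : Integrable (FT ψ) := by
  have hF : Integrable fun v : WithLp 2 (ℝ × ℝ) ↦ 𝓕 ψ.compOfLp ((2 * π)⁻¹ • v) :=
    (𝓕 ψ.compOfLp).integrable.comp_smul (by positivity)
  rw [funext (FT_eq_fourier ψ)]
  exact (((WithLp.volume_preserving_toLp ℝ ℝ).integrable_comp_emb
    (MeasurableEquiv.toLp 2 (ℝ × ℝ)).measurableEmbedding).2 hF).const_mul _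

theorem integral_cexp_mul_FT (ψ : 𝓢(ℝ × ℝ, ℂ)) (k : ℝ × ℝ) :
    ∫ x, exp (I * ((k.1 * x.1 + k.2 * x.2 : ℝ) : ℂ)) * FT ψ x = 2 * π * ψ k := by
  have hrank : Module.finrank ℝ (WithLp 2 (ℝ × ℝ)) = 2 := by
    rw [(WithLp.linearEquiv 2 ℝ (ℝ × ℝ)).finrank_eq]; simp
  simp_rw [FT_eq_fourier]
  rw [← (WithLp.volume_preserving_ofLp ℝ ℝ).integral_comp
    (MeasurableEquiv.toLp 2 (ℝ × ℝ)).symm.measurableEmbedding]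
  have hinner : ∀ x : WithLp 2 (ℝ × ℝ), k.1 * x.ofLp.1 + k.2 * x.ofLp.2 = ⟪x, WithLp.toLp 2 k⟫ := by
    intro x
    simp only [WithLp.prod_inner_apply, RCLike.inner_apply, conj_trivial]
  simp_rw [hinner, WithLp.toLp_ofLp, mul_left_comm _ (2 * (π : ℂ))⁻¹]
  rw [integral_const_mul, ← ψ.coe_compOfLp, integral_cexp_inner_mul_fourier_inv_two_pi_smul ψ.compOfLp.integrable
    (𝓕 ψ.compOfLp).integrable ψ.compOfLp.continuous.continuousAt, hrank]
  have hπ : (π : ℂ) ≠ 0 := ofReal_ne_zero.mpr pi_ne_zero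
  simp only [ψ.coe_compOfLp]
  field_simp

theorem j0_eq_integral_cexp_cos_sub (s : ℂ) (α : ℝ) :
    j0 s = ∫ φ in (0 : ℝ)..2 * π, exp (I * s * cos ((φ - α : ℝ) : ℂ)) := by
  have hper : Function.Periodic (fun φ : ℝ ↦ exp (I * s * cos (φ : ℂ))) (2 * π) := by
    intro φ
    simp only [ofReal_add, ofReal_mul, ofReal_ofNat, Complex.cos_add_two_pi]
  rw [intervalIntegral.integral_comp_sub_right (fun φ : ℝ ↦ exp (I * s * cos (φ : ℂ))),
    zero_sub, sub_eq_neg_add, hper.intervalIntegral_add_eq (-α) 0, zero_add, j0]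

theorem j0_mul_sqrt_eq_integral_cexp (Ω : ℝ) (x : ℝ × ℝ) :
    j0 ((Ω * √(x.1 ^ 2 + x.2 ^ 2) : ℝ) : ℂ) =
      ∫ φ in (0 : ℝ)..2 * π, exp (I * ((Ω * Real.cos φ * x.1 + Ω * Real.sin φ * x.2 : ℝ) : ℂ)) := by
  set z : ℂ := ⟨x.1, x.2⟩
  have hz : ‖z‖ = √(x.1 ^ 2 + x.2 ^ 2) := by
    rw [Complex.norm_def, Complex.normSq_mk, sq, sq]
  rw [j0_eq_integral_cexp_cos_sub _ (arg z)]
  congr 1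
  ext φ
  have hphase : Ω * √(x.1 ^ 2 + x.2 ^ 2) * Real.cos (φ - arg z) =
      Ω * Real.cos φ * x.1 + Ω * Real.sin φ * x.2 := by
    rw [← hz, Real.cos_sub]
    linear_combination Ω * Real.cos φ * norm_mul_cos_arg z + Ω * Real.sin φ * norm_mul_sin_arg z
  rw [← hphase, ← ofReal_cos]
  push_cast
  ring_nf

theorem intervalIntegral_integral_cexp_mul_swap {α : Type*} [MeasurableSpace α] {μ : Measure α}
    [SFinite μ] {θ : ℝ → α → ℝ} (hθ : Measurable (Function.uncurry θ)) {g : α → ℂ}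
    (hg : Integrable g μ) (a b : ℝ) :
    ∫ φ in a..b, ∫ x, exp (I * θ φ x) * g x ∂μ = ∫ x, (∫ φ in a..b, exp (I * θ φ x)) * g x ∂μ := by
  simp_rw [← intervalIntegral.integral_mul_const]
  have : IsFiniteMeasure (volume.restrict (Set.uIoc a b)) := Real.isFiniteMeasure_restrict_Ioc _ _
  refine intervalIntegral_integral_swap ((hg.comp_snd _).bdd_mul (c := 1) ?_ ?_)
  · exact (measurable_const.mul (measurable_ofReal.comp hθ)).cexp.aestronglyMeasurable
  · exact Filter.Eventually.of_forall fun p ↦ (norm_exp_I_mul_ofReal _).le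

theorem fourier_of_bessel_general (Ω : ℝ) (ψ : SchwartzMap (ℝ × ℝ) ℂ) :
    ∫ x : ℝ × ℝ, j0 ((Ω * Real.sqrt (x.1 ^ 2 + x.2 ^ 2) : ℝ) : ℂ) * FT (fun y => ψ y) x
      = (2 * Real.pi : ℂ) *
        ∫ φ in (0:ℝ)..(2 * Real.pi), ψ (Ω * Real.cos φ, Ω * Real.sin φ) := by
  have hθ : Measurable (Function.uncurry fun (φ : ℝ) (x : ℝ × ℝ) ↦
      Ω * Real.cos φ * x.1 + Ω * Real.sin φ * x.2) := by
    fun_prop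
  simp_rw [j0_mul_sqrt_eq_integral_cexp]
  rw [← intervalIntegral_integral_cexp_mul_swap hθ (integrable_FT ψ),
    ← intervalIntegral.integral_const_mul]
  congr 1
  ext φ
  exact integral_cexp_mul_FT ψ (Ω * Real.cos φ, Ω * Real.sin φ)

theorem fourier_of_bessel (Ω : ℝ) (hΩ : 0 < Ω) (ψ : SchwartzMap (ℝ × ℝ) ℂ) :
    ∫ x : ℝ × ℝ, j0 ((Ω * Real.sqrt (x.1 ^ 2 + x.2 ^ 2) : ℝ) : ℂ) * FT (fun y => ψ y) x
      = (2 * Real.pi : ℂ) *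
        ∫ φ in (0:ℝ)..(2 * Real.pi), ψ (Ω * Real.cos φ, Ω * Real.sin φ) :=
  fourier_of_bessel_general Ω ψ
end
end

section
/- The SE(2)-Bargmann transform is an isometry: for all Φ ∈ L²(S¹), ∫₀^{2π} ∫₀^{2π} |N e^{λΩ cos(θ - φ)} Φ(φ)|² dφ dθ = ‖Φ‖²_{L²(S¹)}, where N = (∫₀^{2π} e^{2λΩ cos φ} dφ)^{-1/2}; equivalently, the angular part of the Fourier data of B_Ω^λ Φ has L²(S¹×S¹)-norm equal to ‖Φ‖_{L²(S¹)}. -/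
/-!
Since ‖N e^{λΩ cos(θ-φ)} Φ(φ)‖² = N² e^{2λΩ cos(θ-φ)} ‖Φ(φ)‖², Fubini reduces the double integral
to integrating the kernel s ↦ N² e^{2λΩ cos s} in θ over a full period first; by periodicity that
integral does not depend on φ, and it equals 1 by the choice of N.
-/

open MeasureTheory Set

theorem Function.Periodic.intervalIntegral_comp_sub_eq {E : Type*} [NormedAddCommGroup E]
    [NormedSpace ℝ E] {f : ℝ → E} {T : ℝ} (hf : Function.Periodic f T) (t φ : ℝ) :
    ∫ θ in t..t + T, f (θ - φ) = ∫ θ in t..t + T, f θ := by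
  rw [intervalIntegral.integral_comp_sub_right, add_sub_right_comm,
    hf.intervalIntegral_add_eq (t - φ) t]

theorem integral_integral_periodic_kernel_mul {K g : ℝ → ℝ} {T : ℝ} (hT : 0 < T)
    (hK : Continuous K) (hper : Function.Periodic K T) (hg : IntegrableOn g (Ioc 0 T)) :
    ∫ θ in 0..T, ∫ φ in 0..T, K (θ - φ) * g φ = (∫ s in 0..T, K s) * ∫ φ in 0..T, g φ := by
  obtain ⟨c, hc⟩ := (hper.isBounded_of_continuous hT.ne' hK).exists_norm_le
  have hint : Integrable (fun z : ℝ × ℝ => K (z.1 - z.2) * g z.2)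
      ((volume.restrict (Ioc 0 T)).prod (volume.restrict (Ioc 0 T))) :=
    (hg.comp_snd _).bdd_mul (by fun_prop) (.of_forall fun z => hc _ ⟨_, rfl⟩)
  simp only [intervalIntegral.integral_of_le hT.le]
  rw [integral_integral_swap hint, ← integral_const_mul]
  refine setIntegral_congr_fun measurableSet_Ioc fun φ _ => ?_
  rw [integral_mul_const, ← intervalIntegral.integral_of_le hT.le,
    ← intervalIntegral.integral_of_le hT.le, ← zero_add T, hper.intervalIntegral_comp_sub_eq]

theorem intervalIntegral_normalized_sq_eq_one {f : ℝ → ℝ} {a b : ℝ}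
    (hf : 0 < ∫ x in a..b, f x ^ 2) :
    ∫ x in a..b, ((∫ y in a..b, f y ^ 2) ^ (-(1:ℝ)/2) * f x) ^ 2 = 1 := by
  have hsq : ((∫ y in a..b, f y ^ 2) ^ (-(1:ℝ)/2)) ^ 2 = (∫ y in a..b, f y ^ 2)⁻¹ := by
    rw [← Real.rpow_natCast, ← Real.rpow_mul hf.le]
    norm_num [Real.rpow_neg_one]
  simp only [mul_pow, hsq, intervalIntegral.integral_const_mul]
  exact inv_mul_cancel₀ hf.ne'

theorem bargmann_SE2_isometry_general (lam Ω : ℝ)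
    (Φ : ℝ → ℂ)
    (hΦ : MeasureTheory.MemLp Φ 2 (MeasureTheory.volume.restrict (Set.Ioc 0 (2 * Real.pi)))) :
    (∫ θ in (0:ℝ)..(2 * Real.pi), ∫ φ in (0:ℝ)..(2 * Real.pi),
        ‖((∫ s in (0:ℝ)..(2 * Real.pi), Real.exp (2 * lam * Ω * Real.cos s)) ^ (-(1:ℝ)/2)
            * Real.exp (lam * Ω * Real.cos (θ - φ)) : ℝ) * Φ φ‖ ^ 2)
      = ∫ φ in (0:ℝ)..(2 * Real.pi), ‖Φ φ‖ ^ 2 := by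
  have hexp (s : ℝ) :
      Real.exp (2 * lam * Ω * Real.cos s) = Real.exp (lam * Ω * Real.cos s) ^ 2 := by
    rw [← Real.exp_nat_mul]; ring_nf
  simp only [hexp]
  set C := ∫ s in (0:ℝ)..(2 * Real.pi), Real.exp (lam * Ω * Real.cos s) ^ 2
  set K : ℝ → ℝ := fun s => (C ^ (-(1:ℝ)/2) * Real.exp (lam * Ω * Real.cos s)) ^ 2 with hK
  have hnorm (θ φ : ℝ) : ‖(C ^ (-(1:ℝ)/2) * Real.exp (lam * Ω * Real.cos (θ - φ)) : ℝ) * Φ φ‖ ^ 2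
      = K (θ - φ) * ‖Φ φ‖ ^ 2 := by
    rw [norm_mul, Complex.norm_real, mul_pow, Real.norm_eq_abs, sq_abs]
  have hC : 0 < C := intervalIntegral.intervalIntegral_pos_of_pos
    (Continuous.intervalIntegrable (by fun_prop) _ _) (fun _ => by positivity) Real.two_pi_pos
  have hper : Function.Periodic K (2 * Real.pi) := fun s => by simp [hK, Real.cos_add_two_pi]
  have hΦ2 : IntegrableOn (fun φ => ‖Φ φ‖ ^ 2) (Ioc 0 (2 * Real.pi)) := by
    simpa [IntegrableOn] using hΦ.integrable_norm_rpow two_ne_zero ENNReal.ofNat_ne_top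
  simp only [hnorm]
  rw [integral_integral_periodic_kernel_mul Real.two_pi_pos (by fun_prop) hper hΦ2,
    intervalIntegral_normalized_sq_eq_one hC, one_mul]

/-- The SE(2)-Bargmann transform is an isometry from L²(S¹) onto its image:
the angular Fourier data (φ,θ) ↦ N e^{λΩ cos(θ-φ)} Φ(φ) of B_Ω^λ Φ has
L²(S¹×S¹)-norm equal to ‖Φ‖_{L²(S¹)}, where N = (∫₀^{2π} e^{2λΩ cos s} ds)^{-1/2}. -/
theorem bargmann_SE2_isometry (lam Ω : ℝ) (hlam : 0 < lam) (hΩ : 0 < Ω)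
    (Φ : ℝ → ℂ)
    (hΦ : MeasureTheory.MemLp Φ 2 (MeasureTheory.volume.restrict (Set.Ioc 0 (2 * Real.pi)))) :
    (∫ θ in (0:ℝ)..(2 * Real.pi), ∫ φ in (0:ℝ)..(2 * Real.pi),
        ‖((∫ s in (0:ℝ)..(2 * Real.pi), Real.exp (2 * lam * Ω * Real.cos s)) ^ (-(1:ℝ)/2)
            * Real.exp (lam * Ω * Real.cos (θ - φ)) : ℝ) * Φ φ‖ ^ 2)
      = ∫ φ in (0:ℝ)..(2 * Real.pi), ‖Φ φ‖ ^ 2 :=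
  bargmann_SE2_isometry_general lam Ω Φ hΦ
end
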